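/- There exists a universal constant c > 0 such that for all positive integers n, all integers k with 1 ≤ k ≤ n−1, and all positive integers q with q ≤ 0.7·(n−k), one has Φ̄^{−1}(q/n) − Φ̄^{−1}(q/(n−k)) ≤ c · log(n/(n−k)) / max( √( max(log((n−k)/q), 0) ), 1 ). -/

import Mathlib

open Real

/-- Standard normal density. -/
noncomputable def gphi (t : ℝ) : ℝ := (Real.sqrt (2 * Real.pi))⁻¹ * Real.exp (-(t ^ 2) / 2)

/-- Standard normal upper-tail (survival) function. -/
noncomputable def Phibar (t : ℝ) : ℝ := ∫ s in Set.Ioi t, gphi s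

/-- Inverse of the standard normal upper-tail function. -/
noncomputable def PhibarInv (x : ℝ) : ℝ := Function.invFun Phibar x

open MeasureTheory Set Filter

/-! The function `t ↦ -log (Phibar t)` has derivative the inverse Mills ratio
`gphi t / Phibar t`, which is at least `t` for `t > 0` (Mills' inequality
`Phibar t ≤ gphi t / t`) and at least `1/6` for `t ≥ -1`. For `x = PhibarInv (q/(n-k))`, which is
`≥ -1` because `q/(n-k) ≤ 0.7 < Phibar (-1)`, and `y = PhibarInv (q/n)`, the mean value theorem
gives `max x (1/6) * (y - x) ≤ log (n/(n-k))`. On the other side `Phibar x ≥ gphi (|x| + 1)`, so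
`log ((n-k)/q) = -log (Phibar x) ≤ 4 * max x 1 ^ 2` and the denominator is at most
`2 * max x 1 ≤ 12 * max x (1/6)`. -/

lemma gphi_eq (t : ℝ) : gphi t = (√(2 * π))⁻¹ * exp (-(1 / 2) * t ^ 2) := by
  unfold gphi; ring_nf

lemma gphi_pos (t : ℝ) : 0 < gphi t := by
  unfold gphi; positivity

lemma gphi_le_gphi_of_sq_le {s t : ℝ} (h : s ^ 2 ≤ t ^ 2) : gphi t ≤ gphi s := by
  unfold gphi; gcongr

lemma two_point_five_le_sqrt_two_pi : 2.5 ≤ √(2 * π) :=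
  le_sqrt_of_sq_le (by nlinarith [pi_gt_d2])

lemma sqrt_two_pi_le_three : √(2 * π) ≤ 3 :=
  sqrt_le_iff.2 ⟨by norm_num, by nlinarith [pi_lt_d2]⟩

lemma gphi_le_half (t : ℝ) : gphi t ≤ 1 / 2 := by
  have hexp : exp (-(t ^ 2) / 2) ≤ 1 := exp_le_one_iff.2 (by nlinarith [sq_nonneg t])
  have hinv : (√(2 * π))⁻¹ ≤ 1 / 2 := by
    rw [inv_le_comm₀ (by positivity) (by norm_num)]; linarith [two_point_five_le_sqrt_two_pi]
  unfold gphi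
  nlinarith [exp_pos (-(t ^ 2) / 2), inv_nonneg.2 (sqrt_nonneg (2 * π))]

lemma gphi_one_eq : gphi 1 = (√(2 * π) * exp (1 / 2))⁻¹ := by
  rw [gphi, mul_inv, ← exp_neg]; norm_num

lemma one_sixth_le_gphi_one : 1 / 6 ≤ gphi 1 := by
  have hexp : exp (1 / 2) ≤ 2 := by
    rw [← le_log_iff_exp_le two_pos]; linarith [log_two_gt_d9]
  rw [gphi_one_eq, le_inv_comm₀ (by norm_num) (by positivity)]
  nlinarith [sqrt_two_pi_le_three, exp_pos (1 / 2 : ℝ), sqrt_nonneg (2 * π)]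

lemma gphi_one_lt : gphi 1 < 0.3 := by
  have hexp : 3 / 2 ≤ exp (1 / 2) := by linarith [add_one_le_exp (1 / 2 : ℝ)]
  rw [gphi_one_eq, inv_lt_comm₀ (by positivity) (by norm_num)]
  nlinarith [two_point_five_le_sqrt_two_pi, sqrt_nonneg (2 * π)]

lemma continuous_gphi : Continuous gphi := by
  unfold gphi; fun_prop

lemma integrable_gphi : Integrable gphi :=
  ((integrable_exp_neg_mul_sq (by norm_num : (0 : ℝ) < 1 / 2)).const_mul _).congr
    (Eventually.of_forall fun t => (gphi_eq t).symm)

lemma integral_gphi : ∫ s, gphi s = 1 := by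
  simp_rw [gphi_eq]
  rw [integral_const_mul, integral_gaussian, show π / (1 / 2 : ℝ) = 2 * π by ring]
  exact inv_mul_cancel₀ (by positivity)

lemma hasDerivAt_gphi (t : ℝ) : HasDerivAt gphi (-t * gphi t) t := by
  have hexponent : HasDerivAt (fun s : ℝ => -(s ^ 2) / 2) (-t) t := by
    simpa using ((hasDerivAt_pow 2 t).neg.div_const 2).congr_deriv (by push_cast; ring)
  have h : HasDerivAt gphi _ t := hexponent.exp.const_mul (√(2 * π))⁻¹
  exact h.congr_deriv (by unfold gphi; ring)

lemma tendsto_gphi_atTop : Tendsto gphi atTop (nhds 0) := by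
  have h : Tendsto (fun t : ℝ => -(1 / 2) * t ^ 2) atTop atBot :=
    (tendsto_pow_atTop two_ne_zero).const_mul_atTop_of_neg (by norm_num)
  have h' := (tendsto_exp_atBot.comp h).const_mul (√(2 * π))⁻¹
  rw [mul_zero] at h'
  exact h'.congr fun t => (gphi_eq t).symm

lemma integrable_mul_gphi : Integrable fun s : ℝ => s * gphi s :=
  ((integrable_mul_exp_neg_mul_sq (by norm_num : (0 : ℝ) < 1 / 2)).const_mul (√(2 * π))⁻¹).congr
    (Eventually.of_forall fun s => by beta_reduce; rw [gphi_eq]; ring)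

lemma integral_Ioi_mul_gphi (t : ℝ) : ∫ s in Ioi t, s * gphi s = gphi t := by
  have h := integral_Ioi_of_hasDerivAt_of_tendsto' (a := t) (f := fun s => -gphi s)
    (fun s _ => (hasDerivAt_gphi s).neg) (by simpa using integrable_mul_gphi.integrableOn)
    (by simpa using tendsto_gphi_atTop.neg)
  simp only [neg_mul, neg_neg, zero_sub] at h
  exact h

lemma phibar_sub_phibar (a b : ℝ) : Phibar a - Phibar b = ∫ s in a..b, gphi s :=
  intervalIntegral.integral_Ioi_sub_Ioi' integrable_gphi.integrableOn integrable_gphi.integrableOn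

lemma hasDerivAt_phibar (t : ℝ) : HasDerivAt Phibar (-gphi t) t := by
  have h := (intervalIntegral.integral_hasDerivAt_right
    (continuous_gphi.intervalIntegrable 0 t) (continuous_gphi.stronglyMeasurableAtFilter _ _)
    continuous_gphi.continuousAt).const_sub (Phibar 0)
  refine h.congr_of_eventuallyEq (Eventually.of_forall fun s => ?_)
  simp only [← phibar_sub_phibar, sub_sub_cancel]

lemma continuous_phibar : Continuous Phibar :=
  continuous_iff_continuousAt.2 fun t => (hasDerivAt_phibar t).continuousAt

lemma phibar_antitone : Antitone Phibar :=
  antitone_of_deriv_nonpos (fun t => (hasDerivAt_phibar t).differentiableAt) fun t => by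
    rw [(hasDerivAt_phibar t).deriv]; exact neg_nonpos.2 (gphi_pos t).le

lemma phibar_nonneg (t : ℝ) : 0 ≤ Phibar t :=
  setIntegral_nonneg measurableSet_Ioi fun s _ => (gphi_pos s).le

lemma phibar_neg (t : ℝ) : Phibar (-t) = 1 - Phibar t := by
  have hsplit := intervalIntegral.integral_Iic_add_Ioi (b := t)
    integrable_gphi.integrableOn integrable_gphi.integrableOn
  have hrefl : ∫ s in Iic t, gphi s = Phibar (-t) := by
    rw [Phibar, ← integral_comp_neg_Iic]
    simp [gphi]
  rw [integral_gphi, hrefl] at hsplit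
  change Phibar (-t) + Phibar t = 1 at hsplit
  linarith

lemma phibar_le_one (t : ℝ) : Phibar t ≤ 1 := by
  have h := phibar_neg (-t)
  rw [neg_neg] at h
  linarith [phibar_nonneg (-t)]

lemma phibar_le_gphi_div {t : ℝ} (ht : 0 < t) : Phibar t ≤ gphi t / t := by
  have h : Phibar t ≤ ∫ s in Ioi t, t⁻¹ * (s * gphi s) := by
    refine setIntegral_mono_on integrable_gphi.integrableOn ?_ measurableSet_Ioi fun s hs => ?_
    · exact (integrable_mul_gphi.const_mul _).integrableOn
    · rw [← mul_assoc, le_mul_iff_one_le_left (gphi_pos s)]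
      exact (one_le_inv_mul₀ ht).2 (le_of_lt hs)
  rwa [integral_const_mul, integral_Ioi_mul_gphi, inv_mul_eq_div] at h

lemma phibar_le_inv {t : ℝ} (ht : 0 < t) : Phibar t ≤ t⁻¹ :=
  (phibar_le_gphi_div ht).trans (by
    rw [div_eq_mul_inv]; nlinarith [gphi_le_half t, inv_pos.2 ht])

lemma gphi_abs_add_one_le_phibar (t : ℝ) : gphi (|t| + 1) ≤ Phibar t := by
  have hstrip : ∫ _ in t..t + 1, gphi (|t| + 1) ≤ ∫ s in t..t + 1, gphi s := by
    refine intervalIntegral.integral_mono_on (by linarith) intervalIntegrable_const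
      (continuous_gphi.intervalIntegrable _ _) fun s hs => gphi_le_gphi_of_sq_le ?_
    rw [← sq_abs s]
    gcongr
    rw [abs_le]
    constructor <;> linarith [hs.1, hs.2, neg_abs_le t, le_abs_self t]
  rw [intervalIntegral.integral_const, ← phibar_sub_phibar] at hstrip
  simp only [add_sub_cancel_left, one_smul] at hstrip
  linarith [phibar_nonneg (t + 1)]

lemma phibar_pos (t : ℝ) : 0 < Phibar t :=
  (gphi_pos _).trans_le (gphi_abs_add_one_le_phibar t)

lemma phibar_phibarInv {p : ℝ} (hp0 : 0 < p) (hp1 : p < 1) : Phibar (PhibarInv p) = p := by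
  refine Function.invFun_eq (mem_range_of_exists_le_of_exists_ge continuous_phibar
    ⟨p⁻¹, by simpa using phibar_le_inv (inv_pos.2 hp0)⟩ ⟨-(1 - p)⁻¹, ?_⟩)
  have h := phibar_le_inv (inv_pos.2 (sub_pos.2 hp1))
  rw [inv_inv] at h
  rw [phibar_neg]
  linarith

lemma le_gphi_div_phibar {t : ℝ} (ht : 0 < t) : t ≤ gphi t / Phibar t := by
  rw [le_div_iff₀ (phibar_pos t), ← le_div_iff₀' ht]
  exact phibar_le_gphi_div ht

lemma one_sixth_le_gphi_div_phibar {t : ℝ} (ht : -1 ≤ t) : 1 / 6 ≤ gphi t / Phibar t := by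
  rcases le_or_gt 1 t with h1 | h1
  · linarith [le_gphi_div_phibar (by linarith : 0 < t)]
  · have hgphi : 1 / 6 ≤ gphi t :=
      one_sixth_le_gphi_one.trans (gphi_le_gphi_of_sq_le (by nlinarith))
    exact hgphi.trans (le_div_self (gphi_pos t).le (phibar_pos t) (phibar_le_one t))

lemma hasDerivAt_neg_log_phibar (t : ℝ) :
    HasDerivAt (fun s => -log (Phibar s)) (gphi t / Phibar t) t := by
  have h := ((hasDerivAt_phibar t).log (phibar_pos t).ne').neg
  rwa [neg_div, neg_neg] at h

lemma max_mul_sub_le_log_phibar_sub {x y : ℝ} (hx : -1 ≤ x) (hxy : x ≤ y) :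
    max x (1 / 6) * (y - x) ≤ log (Phibar x) - log (Phibar y) := by
  have hslope : ∀ t ∈ interior (Ici x), max x (1 / 6) ≤ deriv (fun s => -log (Phibar s)) t := by
    intro t ht
    rw [interior_Ici, mem_Ioi] at ht
    have hsixth := one_sixth_le_gphi_div_phibar (hx.trans ht.le)
    rw [(hasDerivAt_neg_log_phibar t).deriv]
    refine max_le ?_ hsixth
    rcases le_or_gt x 0 with hx0 | hx0
    · linarith
    · exact ht.le.trans (le_gphi_div_phibar (hx0.trans ht))
  have h := (convex_Ici x).mul_sub_le_image_sub_of_le_deriv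
    (fun t _ => (hasDerivAt_neg_log_phibar t).continuousAt.continuousWithinAt)
    (fun t _ => (hasDerivAt_neg_log_phibar t).differentiableAt.differentiableWithinAt)
    hslope x (mem_Ici.2 le_rfl) y hxy hxy
  linarith

lemma log_gphi (t : ℝ) : log (gphi t) = -log √(2 * π) - t ^ 2 / 2 := by
  rw [gphi, log_mul (by positivity) (exp_pos _).ne', log_inv, log_exp]; ring

lemma neg_log_phibar_le {x : ℝ} (hx : -1 ≤ x) : -log (Phibar x) ≤ 4 * max x 1 ^ 2 := by
  have hu : 1 ≤ max x 1 := le_max_right x 1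
  have habs : |x| ≤ max x 1 := abs_le.2 ⟨by linarith, le_max_left x 1⟩
  have htail := log_le_log (gphi_pos _) (gphi_abs_add_one_le_phibar x)
  have hsqrt : log √(2 * π) ≤ 2 := by
    linarith [log_le_sub_one_of_pos (by positivity : 0 < √(2 * π)), sqrt_two_pi_le_three]
  have hsq : (|x| + 1) ^ 2 ≤ (2 * max x 1) ^ 2 := by gcongr; linarith
  rw [log_gphi] at htail
  nlinarith

lemma max_sqrt_neg_log_phibar_le {x : ℝ} (hx : -1 ≤ x) :
    max √(max (-log (Phibar x)) 0) 1 ≤ 2 * max x 1 := by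
  have hu : 1 ≤ max x 1 := le_max_right x 1
  refine max_le ?_ (by linarith)
  calc √(max (-log (Phibar x)) 0) ≤ √((2 * max x 1) ^ 2) :=
        sqrt_le_sqrt (max_le (by linarith [neg_log_phibar_le hx]) (by positivity))
    _ = 2 * max x 1 := sqrt_sq (by linarith)

lemma neg_one_le_of_phibar_le {x : ℝ} (h : Phibar x ≤ 0.7) : -1 ≤ x := by
  by_contra! hx
  have hmono := phibar_antitone hx.le
  have htail : Phibar 1 ≤ gphi 1 := by simpa using phibar_le_gphi_div one_pos
  rw [phibar_neg] at hmono
  linarith [gphi_one_lt]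

theorem phibarInv_sub_phibarInv_le {a b : ℝ} (hb : 0 < b) (hba : b < a) (ha : a ≤ 0.7) :
    PhibarInv b - PhibarInv a ≤ 12 * log (a / b) / max √(max (log a⁻¹) 0) 1 := by
  have ha1 : a < 1 := ha.trans_lt (by norm_num)
  set x := PhibarInv a
  set y := PhibarInv b
  have hx : Phibar x = a := phibar_phibarInv (hb.trans hba) ha1
  have hy : Phibar y = b := phibar_phibarInv hb (hba.trans ha1)
  have hx1 : -1 ≤ x := neg_one_le_of_phibar_le (hx ▸ ha)
  have hxy : x ≤ y := le_of_not_gt fun hyx =>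
    (hba.trans_le (hy ▸ hx ▸ phibar_antitone hyx.le)).false
  have hgap := max_mul_sub_le_log_phibar_sub hx1 hxy
  have hden := max_sqrt_neg_log_phibar_le hx1
  rw [hx, hy, ← log_div (hb.trans hba).ne' hb.ne'] at hgap
  rw [hx, ← log_inv] at hden
  have hscale : max x 1 ≤ 6 * max x (1 / 6) := by
    have := le_max_left x (1 / 6)
    have := le_max_right x (1 / 6)
    exact max_le (by linarith) (by linarith)
  rw [le_div_iff₀ (by positivity)]
  calc (y - x) * max √(max (log a⁻¹) 0) 1 ≤ (y - x) * (12 * max x (1 / 6)) := by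
        gcongr
        linarith
    _ = 12 * (max x (1 / 6) * (y - x)) := by ring
    _ ≤ 12 * log (a / b) := by gcongr

theorem quantile_bias_bound :
    ∃ c : ℝ, 0 < c ∧
      ∀ (n k q : ℕ), 0 < n → 1 ≤ k → k ≤ n - 1 → 1 ≤ q → (q : ℝ) ≤ 0.7 * ((n : ℝ) - k) →
        PhibarInv ((q : ℝ) / n) - PhibarInv ((q : ℝ) / ((n : ℝ) - k)) ≤
          c * Real.log ((n : ℝ) / ((n : ℝ) - k)) /
            max (Real.sqrt (max (Real.log (((n : ℝ) - k) / q)) 0)) 1 := by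
  refine ⟨12, by norm_num, fun n k q _ hk hkn hq hq7 => ?_⟩
  have hkn' : (k : ℝ) + 1 ≤ n := by exact_mod_cast (by omega : k + 1 ≤ n)
  have hk' : (1 : ℝ) ≤ k := by exact_mod_cast hk
  have hq' : (0 : ℝ) < q := by exact_mod_cast hq
  have hN : (0 : ℝ) < n - k := by linarith
  have hgap := phibarInv_sub_phibarInv_le (a := q / (n - k)) (b := q / n) (by positivity)
    (div_lt_div_of_pos_left hq' hN (by linarith)) (by rw [div_le_iff₀ hN]; linarith)
  have hratio : (q / (n - k)) / (q / n) = (n : ℝ) / (n - k) := by field_simp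
  rwa [hratio, inv_div] at hgap
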